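/- For every unitary U in SU(2) there exist A, B in SU(2) with A B A† B† = U; in particular one can take A = W exp(iθZ/2) W† and B = i W X W†, where U = W exp(iθZ) W† is a diagonalization of U. -/

import Mathlib

/-
Conjugation by a unitary `W` is a ⋆-automorphism, so it suffices to treat `U = exp(iθZ)`.
With `D = exp(iθZ/2)` one has `X Dᴴ X = D`, since `X` swaps the diagonal entries, hence
`D (iX) Dᴴ (iX)ᴴ = D² = U`. Such a diagonalization exists for every `U ∈ SU(2)`: from
`Uᴴ = adj U` we get `U + Uᴴ = tr U • 1`, so `U` is a scalar plus a multiple of the Hermitian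
matrix `i (Uᴴ - U)` and is diagonalized by its eigenbasis; a diagonal matrix in `SU(2)` is
`exp(iθZ)` with `θ = arg U₀₀`.
-/

open Matrix

noncomputable section

/-- Matrix exponential, defined by its power series. -/
def mexp {m : Type*} [Fintype m] [DecidableEq m] (A : Matrix m m ℂ) : Matrix m m ℂ :=
  ∑' k : ℕ, ((k.factorial : ℂ)⁻¹) • A ^ k

/-- Pauli X. -/
def PX : Matrix (Fin 2) (Fin 2) ℂ := !![0, 1; 1, 0]
/-- Pauli Z. -/
def PZ : Matrix (Fin 2) (Fin 2) ℂ := !![1, 0; 0, -1]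

theorem Unitary.conj_mul_mul_star_mul_star {R : Type*} [Ring R] [StarRing R] {u : R}
    (hu : u ∈ unitary R) (a b : R) :
    u * a * star u * (u * b * star u) * star (u * a * star u) * star (u * b * star u) =
      u * (a * b * star a * star b) * star u := by
  have cancel : ∀ x, star u * (u * x) = x := fun x => by
    rw [← mul_assoc, Unitary.star_mul_self_of_mem hu, one_mul]
  simp only [star_mul, star_star, mul_assoc, cancel]

theorem Matrix.conj_mem_specialUnitaryGroup {n α : Type*} [Fintype n] [DecidableEq n]
    [CommRing α] [StarRing α] {W A : Matrix n n α} (hW : W ∈ unitaryGroup n α)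
    (hA : A ∈ specialUnitaryGroup n α) : W * A * Wᴴ ∈ specialUnitaryGroup n α :=
  ⟨mul_mem (mul_mem hW hA.1) (Unitary.star_mem hW),
    (det_conj_of_mul_eq_one (mem_unitaryGroup_iff.1 hW) (mem_unitaryGroup_iff'.1 hW)).trans hA.2⟩

theorem Matrix.add_conjTranspose_eq_trace_smul_one {α : Type*} [CommRing α] [StarRing α]
    {U : Matrix (Fin 2) (Fin 2) α} (hU : U ∈ specialUnitaryGroup (Fin 2) α) :
    U + Uᴴ = U.trace • 1 := by
  obtain ⟨hUu, hdet⟩ := mem_specialUnitaryGroup_iff.1 hU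
  have hadj : Uᴴ = U.adjugate := by
    rw [← star_eq_conjTranspose, ← inv_eq_right_inv (mem_unitaryGroup_iff.1 hUu), inv_def, hdet]
    simp
  rw [hadj, adjugate_fin_two, trace_fin_two]
  ext i j; fin_cases i <;> fin_cases j <;> simp [one_fin_two]; ring

section

open Complex

theorem Matrix.exists_diagonal_of_add_conjTranspose_eq_smul_one {n : Type*} [Fintype n]
    [DecidableEq n] {U : Matrix n n ℂ} {s : ℂ} (hU : U + Uᴴ = s • 1) :
    ∃ (V : unitaryGroup n ℂ) (μ : n → ℂ),
      U = Unitary.conjStarAlgAut ℂ _ V (diagonal μ) := by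
  set K := I • (Uᴴ - U)
  have hK : K.IsHermitian := by
    simp [K, IsHermitian, conjTranspose_smul, conjTranspose_sub, ← smul_neg]
  have hUK : U = (s / 2) • 1 + (I / 2) • K := by
    have : (s / 2) • (1 : Matrix n n ℂ) = (1 / 2 : ℂ) • (U + Uᴴ) := by
      rw [hU, smul_smul]; ring_nf
    rw [this, smul_smul, div_mul_eq_mul_div, I_mul_I]
    module
  refine ⟨hK.eigenvectorUnitary, fun j => s / 2 + I / 2 * hK.eigenvalues j, ?_⟩
  conv_lhs => rw [hUK, hK.spectral_theorem]
  rw [← map_one (Unitary.conjStarAlgAut ℂ _ hK.eigenvectorUnitary), ← map_smul, ← map_smul,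
    ← map_add, ← diagonal_one, ← diagonal_smul, ← diagonal_smul, diagonal_add]
  congr 2
  ext j
  simp

theorem mexp_eq_exp {m : Type*} [Fintype m] [DecidableEq m] (A : Matrix m m ℂ) :
    mexp A = NormedSpace.exp A := by
  rw [mexp, NormedSpace.exp_eq_tsum ℂ]

theorem mexp_smul_PZ (c : ℂ) : mexp (c • PZ) = diagonal ![exp c, exp (-c)] := by
  have : c • PZ = diagonal ![c, -c] := by
    ext i j; fin_cases i <;> fin_cases j <;> simp [PZ]
  rw [mexp_eq_exp, this, exp_diagonal, Pi.exp_def, exp_eq_exp_ℂ]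
  ext i j; fin_cases i <;> fin_cases j <;> simp

theorem mexp_smul_PZ_mul_mexp_smul_PZ (c d : ℂ) :
    mexp (c • PZ) * mexp (d • PZ) = mexp ((c + d) • PZ) := by
  simp only [mexp_smul_PZ, diagonal_mul_diagonal', neg_add, exp_add]
  ext i j; fin_cases i <;> fin_cases j <;> simp

theorem conjTranspose_mexp_smul_PZ (c : ℂ) : (mexp (c • PZ))ᴴ = mexp (star c • PZ) := by
  rw [mexp_smul_PZ, mexp_smul_PZ, diagonal_conjTranspose]
  ext i j; fin_cases i <;> fin_cases j <;> simp [← exp_conj]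

theorem PX_mul_mexp_smul_PZ_mul_PX (c : ℂ) : PX * mexp (c • PZ) * PX = mexp ((-c) • PZ) := by
  rw [mexp_smul_PZ, mexp_smul_PZ, diagonal_vec2, diagonal_vec2, PX]
  simp

theorem det_mexp_smul_PZ (c : ℂ) : (mexp (c • PZ)).det = 1 := by
  simp [mexp_smul_PZ, diagonal_vec2, ← exp_add]

theorem mexp_I_mul_smul_PZ_mem_specialUnitaryGroup (t : ℝ) :
    mexp ((I * t) • PZ) ∈ specialUnitaryGroup (Fin 2) ℂ := by
  refine ⟨mem_unitaryGroup_iff.2 ?_, det_mexp_smul_PZ _⟩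
  rw [star_eq_conjTranspose, conjTranspose_mexp_smul_PZ, mexp_smul_PZ_mul_mexp_smul_PZ,
    show I * t + star (I * t) = 0 by simp, zero_smul, mexp_eq_exp, NormedSpace.exp_zero]

theorem conjTranspose_I_smul_PX : (I • PX)ᴴ = -(I • PX) := by
  ext i j; fin_cases i <;> fin_cases j <;> simp [PX]

theorem I_smul_PX_mem_specialUnitaryGroup : I • PX ∈ specialUnitaryGroup (Fin 2) ℂ := by
  refine ⟨mem_unitaryGroup_iff.2 ?_, ?_⟩
  · rw [star_eq_conjTranspose, conjTranspose_I_smul_PX]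
    simp [PX, one_fin_two]
  · simp [PX]

theorem commutator_mexp_smul_PZ_I_smul_PX (c : ℂ) :
    mexp (c • PZ) * (I • PX) * (mexp (c • PZ))ᴴ * (I • PX)ᴴ =
      mexp ((c - star c) • PZ) := by
  rw [conjTranspose_I_smul_PX, conjTranspose_mexp_smul_PZ]
  calc _ = mexp (c • PZ) * (PX * mexp (star c • PZ) * PX) := by
          simp only [mul_neg, smul_mul_assoc, mul_smul_comm, smul_smul, Matrix.mul_assoc]
          simp
    _ = _ := by rw [PX_mul_mexp_smul_PZ_mul_PX, mexp_smul_PZ_mul_mexp_smul_PZ, sub_eq_add_neg]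

theorem commutator_conj_mexp_half_I_smul_conj_PX
    {W : Matrix (Fin 2) (Fin 2) ℂ} (hW : W ∈ unitaryGroup (Fin 2) ℂ) (θ : ℝ) :
    (W * mexp ((I * (θ / 2)) • PZ) * Wᴴ) * (I • (W * PX * Wᴴ)) *
        (W * mexp ((I * (θ / 2)) • PZ) * Wᴴ)ᴴ * (I • (W * PX * Wᴴ))ᴴ =
      W * mexp ((I * θ) • PZ) * Wᴴ := by
  rw [← smul_mul_assoc, ← mul_smul_comm]
  simp only [← star_eq_conjTranspose]
  rw [Unitary.conj_mul_mul_star_mul_star hW]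
  simp only [star_eq_conjTranspose]
  rw [commutator_mexp_smul_PZ_I_smul_PX]
  congr 4
  simp only [star_mul', conj_I, Complex.star_def, map_div₀, conj_ofReal, map_ofNat]
  ring

theorem exists_eq_mexp_of_diagonal_mem_specialUnitaryGroup {μ : Fin 2 → ℂ}
    (h : diagonal μ ∈ specialUnitaryGroup (Fin 2) ℂ) :
    ∃ θ : ℝ, diagonal μ = mexp ((I * θ) • PZ) := by
  obtain ⟨hu, hdet⟩ := mem_specialUnitaryGroup_iff.1 h
  have hnorm : ‖μ 0‖ = 1 := by
    have h00 := congrFun (congrFun (mem_unitaryGroup_iff'.1 hu) 0) 0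
    simp only [star_eq_conjTranspose, diagonal_conjTranspose, diagonal_mul_diagonal,
      diagonal_apply_eq, one_apply_eq, Pi.star_apply, RCLike.star_def, conj_mul'] at h00
    exact (pow_eq_one_iff_of_nonneg (norm_nonneg _) two_ne_zero).1 (by exact_mod_cast h00)
  have hμ0 : μ 0 = exp (I * arg (μ 0)) := by
    conv_lhs => rw [← norm_mul_exp_arg_mul_I (μ 0), hnorm, ofReal_one, one_mul, mul_comm]
  have hμ1 : μ 1 = exp (-(I * arg (μ 0))) := by
    rw [det_diagonal, Fin.prod_univ_two] at hdet
    rw [Complex.exp_neg, ← hμ0, eq_inv_of_mul_eq_one_right hdet]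
  refine ⟨arg (μ 0), ?_⟩
  rw [mexp_smul_PZ, ← hμ0, ← hμ1]
  congr 1
  ext i; fin_cases i <;> rfl

theorem exists_eq_conj_mexp_of_mem_specialUnitaryGroup {U : Matrix (Fin 2) (Fin 2) ℂ}
    (hU : U ∈ specialUnitaryGroup (Fin 2) ℂ) :
    ∃ W ∈ unitaryGroup (Fin 2) ℂ, ∃ θ : ℝ, U = W * mexp ((I * θ) • PZ) * Wᴴ := by
  obtain ⟨V, μ, hUV⟩ := exists_diagonal_of_add_conjTranspose_eq_smul_one
    (add_conjTranspose_eq_trace_smul_one hU)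
  have hdiag : diagonal μ ∈ specialUnitaryGroup (Fin 2) ℂ := by
    have hμU : diagonal μ = star (V : Matrix _ _ ℂ) * U * (star (V : Matrix _ _ ℂ))ᴴ := by
      rw [← star_eq_conjTranspose, star_star, hUV,
        ← Unitary.conjStarAlgAut_symm_apply (S := ℂ), StarAlgEquiv.symm_apply_apply]
    exact hμU ▸ conj_mem_specialUnitaryGroup (Unitary.star_mem V.2) hU
  obtain ⟨θ, hθ⟩ := exists_eq_mexp_of_diagonal_mem_specialUnitaryGroup hdiag
  exact ⟨V, V.2, θ, by rw [hUV, hθ]; rfl⟩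

end

/-- **Every `U ∈ SU(2)` is a commutator `A B A† B†` with `A, B ∈ SU(2)`.**
In particular, if `U = W exp(iθZ) W†` is a diagonalization of `U`, then one may take
`A = W exp(iθZ/2) W†` and `B = i W X W†`. -/
theorem su2_is_commutator (U : Matrix (Fin 2) (Fin 2) ℂ)
    (hU : U ∈ Matrix.unitaryGroup (Fin 2) ℂ) (hdet : U.det = 1) :
    (∃ A B : Matrix (Fin 2) (Fin 2) ℂ,
      A ∈ Matrix.unitaryGroup (Fin 2) ℂ ∧ A.det = 1 ∧
      B ∈ Matrix.unitaryGroup (Fin 2) ℂ ∧ B.det = 1 ∧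
      A * B * Aᴴ * Bᴴ = U) ∧
    ∀ (W : Matrix (Fin 2) (Fin 2) ℂ) (θ : ℝ),
      W ∈ Matrix.unitaryGroup (Fin 2) ℂ →
      U = W * mexp ((Complex.I * θ) • PZ) * Wᴴ →
      (W * mexp ((Complex.I * (θ / 2)) • PZ) * Wᴴ) * (Complex.I • (W * PX * Wᴴ)) *
        (W * mexp ((Complex.I * (θ / 2)) • PZ) * Wᴴ)ᴴ * (Complex.I • (W * PX * Wᴴ))ᴴ = U := by
  refine ⟨?_, fun W θ hW hUW => hUW ▸ commutator_conj_mexp_half_I_smul_conj_PX hW θ⟩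
  obtain ⟨W, hW, θ, hUW⟩ :=
    exists_eq_conj_mexp_of_mem_specialUnitaryGroup (mem_specialUnitaryGroup_iff.2 ⟨hU, hdet⟩)
  have hA := conj_mem_specialUnitaryGroup hW (mexp_I_mul_smul_PZ_mem_specialUnitaryGroup (θ / 2))
  have hB := conj_mem_specialUnitaryGroup hW I_smul_PX_mem_specialUnitaryGroup
  push_cast at hA
  rw [mul_smul_comm, smul_mul_assoc] at hB
  exact ⟨_, _, hA.1, hA.2, hB.1, hB.2,
    hUW ▸ commutator_conj_mexp_half_I_smul_conj_PX hW θ⟩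

end
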